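/- Let g and h be partial term graphs over Σ_⊥ and d < ω. If g ≤⊥r h and the ⊥-depth of g (the minimum depth of a ⊥-labelled node of g, ω if none) is at least d, then the rigid truncations of g and h at depth d are isomorphic: g†d ≅ h†d. -/

import Mathlib

set_option autoImplicit false

namespace TGR

/-- A signature: a type of symbols, each with a finite arity. -/
structure Signature where
  Sym : Type
  ar : Sym → ℕ

/-- The signature `Σ_⊥`: `Σ` extended by a fresh nullary symbol `⊥` (here `none`). -/
def Signature.bot (S : Signature) : Signature where
  Sym := Option S.Sym
  ar := fun o => match o with
    | none => 0
    | some f => S.ar f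

/-- A rooted graph over a signature `S` with nodes `N`: a labelling, a successor
function respecting arities, and a root node. -/
structure TermGraph (S : Signature) (N : Type) where
  lab : N → S.Sym
  suc : (n : N) → Fin (S.ar (lab n)) → N
  root : N

namespace TermGraph

variable {S : Signature} {N M K : Type}

/-- `g.IsPos π n`: `π` is a position (path of successor indices from the root) of node `n`. -/
inductive IsPos (g : TermGraph S N) : List ℕ → N → Prop
  | root : IsPos g [] g.root
  | step {π : List ℕ} {n : N} (h : IsPos g π n) (i : Fin (S.ar (g.lab n))) :
      IsPos g (π ++ [(i : ℕ)]) (g.suc n i)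

/-- All nodes are reachable from the root. -/
def Reachable (g : TermGraph S N) : Prop :=
  ∀ n : N, ∃ π : List ℕ, g.IsPos π n

/-- The set of positions of `g`. -/
def pos (g : TermGraph S N) : Set (List ℕ) :=
  {π | ∃ n : N, g.IsPos π n}

/-- The set of positions of node `n` in `g`. -/
def nodePos (g : TermGraph S N) (n : N) : Set (List ℕ) :=
  {π | g.IsPos π n}

/-- `π ∼_g π'`: `π` and `π'` are positions of the same node. -/
def Aliases (g : TermGraph S N) (π π' : List ℕ) : Prop :=
  ∃ n : N, g.IsPos π n ∧ g.IsPos π' n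

/-- A position is acyclic if it passes no node twice. -/
def IsAcyclicPos (g : TermGraph S N) (π : List ℕ) : Prop :=
  ∀ (π₁ π₂ : List ℕ) (n : N), π₁ <+: π₂ → π₂ <+: π →
    g.IsPos π₁ n → g.IsPos π₂ n → π₁ = π₂

/-- The set of acyclic positions of node `n` in `g`. -/
def nodePosAcy (g : TermGraph S N) (n : N) : Set (List ℕ) :=
  {π | g.IsPos π n ∧ g.IsAcyclicPos π}

/-- The set of acyclic positions of `g`. -/
def posAcy (g : TermGraph S N) : Set (List ℕ) :=
  {π | (∃ n : N, g.IsPos π n) ∧ g.IsAcyclicPos π}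

/-- The depth of a node: the minimal length of its positions. -/
noncomputable def depth (g : TermGraph S N) (n : N) : ℕ :=
  sInf {k : ℕ | ∃ π : List ℕ, g.IsPos π n ∧ π.length = k}

open Classical in
/-- The (unique) node at a position. -/
noncomputable def nodeAt (g : TermGraph S N) (π : List ℕ) : N :=
  if h : ∃ n : N, g.IsPos π n then h.choose else g.root

/-- The label `g(π)` at a position. -/
noncomputable def labAt (g : TermGraph S N) (π : List ℕ) : S.Sym :=
  g.lab (g.nodeAt π)

/-- `Δ`-homomorphism: root, labelling and successor conditions, the latter two
suspended on `Δ`-labelled nodes. -/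
structure IsDHom (Δ : Set S.Sym) (g : TermGraph S N) (h : TermGraph S M)
    (φ : N → M) : Prop where
  root_eq : φ g.root = h.root
  lab_eq : ∀ n : N, g.lab n ∉ Δ → h.lab (φ n) = g.lab n
  suc_eq : ∀ n : N, g.lab n ∉ Δ → ∀ (i : ℕ) (hi : i < S.ar (g.lab n))
      (hi' : i < S.ar (h.lab (φ n))),
      φ (g.suc n ⟨i, hi⟩) = h.suc (φ n) ⟨i, hi'⟩

/-- Rigidity: `Pa_g(n) = Pa_h(φ n)` for all non-`Δ`-labelled nodes `n`. -/
def IsRigid (Δ : Set S.Sym) (g : TermGraph S N) (h : TermGraph S M)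
    (φ : N → M) : Prop :=
  ∀ n : N, g.lab n ∉ Δ → g.nodePosAcy n = h.nodePosAcy (φ n)

/-- Rigid `Δ`-homomorphism. -/
def IsRigidDHom (Δ : Set S.Sym) (g : TermGraph S N) (h : TermGraph S M)
    (φ : N → M) : Prop :=
  IsDHom Δ g h φ ∧ IsRigid Δ g h φ

/-- Isomorphism of term graphs: a homomorphism with an inverse homomorphism. -/
def Iso (g : TermGraph S N) (h : TermGraph S M) : Prop :=
  ∃ (φ : N → M) (ψ : M → N), IsDHom ∅ g h φ ∧ IsDHom ∅ h g ψ ∧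
    (∀ n : N, ψ (φ n) = n) ∧ (∀ m : M, φ (ψ m) = m)

/-- A partial term graph (over `Σ_⊥`) is total if no node is labelled `⊥`. -/
def Total (g : TermGraph S.bot N) : Prop := ∀ n : N, g.lab n ≠ none

/-- Rigid `⊥`-homomorphism between partial term graphs. -/
def IsRigidBotHom (g : TermGraph S.bot N) (h : TermGraph S.bot M)
    (φ : N → M) : Prop :=
  IsRigidDHom ({none} : Set (Option S.Sym)) g h φ

/-- The `⊥`-depth of a partial term graph: the minimal depth of a `⊥`-labelled
node, `ω` (`⊤`) if there is none. -/
noncomputable def botDepth (g : TermGraph S.bot N) : ℕ∞ :=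
  sInf {d : ℕ∞ | ∃ n : N, g.lab n = none ∧ (g.depth n : ℕ∞) = d}

/-- `m` is an acyclic predecessor of `n`: some acyclic position `π ++ [i]` of `n`
has `π` a position of `m`. -/
def acyPred (g : TermGraph S N) (n : N) : Set N :=
  {m | ∃ (π : List ℕ) (i : ℕ), (π ++ [i]) ∈ g.nodePosAcy n ∧ g.IsPos π m}

/-- Retained nodes of the truncation at depth `d`: the least set of nodes
containing all nodes of depth `< d` and closed under acyclic predecessors. -/
inductive Retained (g : TermGraph S N) (d : ℕ) : N → Prop
  | shallow {n : N} : g.depth n < d → Retained g d n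
  | pred {n m : N} : Retained g d n → m ∈ g.acyPred n → Retained g d m

theorem not_retained_zero {g : TermGraph S N} (n : N) : ¬ g.Retained 0 n := by
  intro h
  induction h with
  | shallow hd => exact Nat.not_lt_zero _ hd
  | pred _ _ ih => exact ih

/-- Fringe nodes of the truncation at depth `d` (a pair `(n, i)` stands for the
fresh node `n^i`); at depth `0` the fringe is just (a copy of) the root. -/
def IsFringe (g : TermGraph S.bot N) (d : ℕ) (p : N × ℕ) : Prop :=
  if d = 0 then p = (g.root, 0)
  else g.Retained d p.1 ∧ ∃ h : p.2 < S.bot.ar (g.lab p.1),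
    (¬ g.Retained d (g.suc p.1 ⟨p.2, h⟩) ∨
      (d - 1 ≤ g.depth p.1 ∧ p.1 ∉ g.acyPred (g.suc p.1 ⟨p.2, h⟩)))

/-- The node set of the rigid truncation: retained nodes plus fringe nodes. -/
def TNode (g : TermGraph S.bot N) (d : ℕ) : Type :=
  {x : N ⊕ (N × ℕ) // Sum.elim (g.Retained d) (g.IsFringe d) x}

def truncLab (g : TermGraph S.bot N) (d : ℕ) (x : TNode g d) : S.bot.Sym :=
  Sum.elim (fun n => g.lab n) (fun _ => none) x.1

open Classical in
noncomputable def truncSuc (g : TermGraph S.bot N) (d : ℕ) :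
    (x : TNode g d) → Fin (S.bot.ar (truncLab g d x)) → TNode g d
  | ⟨Sum.inl n, hn⟩ => fun i =>
      if hf : g.IsFringe d (n, (i : ℕ)) then ⟨Sum.inr (n, (i : ℕ)), hf⟩
      else
        ⟨Sum.inl (g.suc n ⟨(i : ℕ), i.isLt⟩), by
          show g.Retained d (g.suc n ⟨(i : ℕ), i.isLt⟩)
          rcases Nat.eq_zero_or_pos d with hd | hd
          · subst hd
            exact ((not_retained_zero n) hn).elim
          · by_contra hc
            apply hf
            show g.IsFringe d (n, (i : ℕ))
            unfold IsFringe
            rw [if_neg (Nat.pos_iff_ne_zero.mp hd)]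
            exact ⟨hn, i.isLt, Or.inl hc⟩⟩
  | ⟨Sum.inr p, hp⟩ => fun i => absurd i.isLt (Nat.not_lt_zero _)

noncomputable def truncRoot (g : TermGraph S.bot N) (d : ℕ) : TNode g d :=
  if hd : d = 0 then
    ⟨Sum.inr (g.root, 0), by
      subst hd
      show g.IsFringe 0 (g.root, 0)
      simp [IsFringe]⟩
  else
    ⟨Sum.inl g.root, by
      show g.Retained d g.root
      exact Retained.shallow (lt_of_le_of_lt
        (Nat.sInf_le ⟨[], IsPos.root, rfl⟩) (Nat.pos_of_ne_zero hd))⟩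

/-- The rigid truncation `g†d` of a partial term graph at finite depth `d`. -/
noncomputable def trunc (g : TermGraph S.bot N) (d : ℕ) :
    TermGraph S.bot (TNode g d) where
  lab := truncLab g d
  suc := truncSuc g d
  root := truncRoot g d

end TermGraph

/-- A canonical term graph: a term graph whose nodes are sets of positions,
each node being exactly its set of positions, with all nodes reachable. -/
structure CTG (S : Signature) where
  nodes : Set (Set (List ℕ))
  tg : TermGraph S ↥nodes
  reach : tg.Reachable
  canon : ∀ n : ↥nodes, (n : Set (List ℕ)) = tg.nodePos n

namespace CTG

variable {S : Signature}

def pos (g : CTG S) : Set (List ℕ) := g.tg.pos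
def Aliases (g : CTG S) : List ℕ → List ℕ → Prop := g.tg.Aliases
def posAcy (g : CTG S) : Set (List ℕ) := g.tg.posAcy
noncomputable def labAt (g : CTG S) : List ℕ → S.Sym := g.tg.labAt

/-- A canonical partial term graph is total if it has no `⊥`-labelled node. -/
def Total (g : CTG S.bot) : Prop := g.tg.Total

/-- The rigid partial order `g ≤⊥r h`: there is a rigid `⊥`-homomorphism
from `g` to `h`. -/
def LeR (g h : CTG S.bot) : Prop :=
  ∃ φ, TermGraph.IsRigidBotHom g.tg h.tg φ

noncomputable def botDepth (g : CTG S.bot) : ℕ∞ := g.tg.botDepth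

/-- `TruncIso g h d`: the rigid truncations of `g` and `h` at depth `d ≤ ω`
are isomorphic (`g†ω = g`). -/
def TruncIso {N M : Type} (g : TermGraph S.bot N) (h : TermGraph S.bot M)
    (d : ℕ∞) : Prop :=
  (d = ⊤ → TermGraph.Iso g h) ∧
  ∀ k : ℕ, d = (k : ℕ∞) → TermGraph.Iso (g.trunc k) (h.trunc k)

/-- The rigid similarity `sim†(g,h)`: the maximal `d ≤ ω` such that
`g†d ≅ h†d`. -/
noncomputable def simr (g h : CTG S.bot) : ℕ∞ :=
  sSup {d : ℕ∞ | TruncIso g.tg h.tg d}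

open Classical in
/-- The rigid distance `d†(g,h) = 2^{-sim†(g,h)}` (with `2^{-ω} = 0`). -/
noncomputable def rdist (g h : CTG S.bot) : ℝ :=
  if simr g h = ⊤ then 0 else (1 / 2 : ℝ) ^ (simr g h).toNat

def IsUB (A : Set (CTG S.bot)) (u : CTG S.bot) : Prop := ∀ g ∈ A, LeR g u

def IsLubR (A : Set (CTG S.bot)) (u : CTG S.bot) : Prop :=
  IsUB A u ∧ ∀ v, IsUB A v → LeR u v

def IsLB (A : Set (CTG S.bot)) (l : CTG S.bot) : Prop := ∀ g ∈ A, LeR l g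

def IsGlbR (A : Set (CTG S.bot)) (l : CTG S.bot) : Prop :=
  IsLB A l ∧ ∀ m, IsLB A m → LeR m l

/-- A directed set: non-empty and every two elements have an upper bound inside. -/
def DirectedR (A : Set (CTG S.bot)) : Prop :=
  A.Nonempty ∧ ∀ g ∈ A, ∀ h ∈ A, ∃ u ∈ A, LeR g u ∧ LeR h u

/-- `L` is the limit inferior `⨆_{β<α} ⨅_{β≤ι<α} f ι` of the ordinal-indexed
sequence `(f ι)_{ι<α}` in the rigid partial order. -/
def IsLiminfR (α : Ordinal.{0}) (f : Ordinal.{0} → CTG S.bot) (L : CTG S.bot) : Prop :=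
  ∃ inf : Ordinal.{0} → CTG S.bot,
    (∀ β < α, IsGlbR {g | ∃ ι, β ≤ ι ∧ ι < α ∧ g = f ι} (inf β)) ∧
    IsLubR {g | ∃ β < α, g = inf β} L

/-- Cauchy condition for an ordinal-indexed sequence w.r.t. the rigid distance. -/
def OrdCauchy (α : Ordinal.{0}) (f : Ordinal.{0} → CTG S.bot) : Prop :=
  ∀ ε : ℝ, 0 < ε → ∃ β < α, ∀ ι ι' : Ordinal.{0},
    β < ι → ι < ι' → ι' < α → rdist (f ι) (f ι') < ε

/-- Convergence of an ordinal-indexed sequence to `g` w.r.t. the rigid distance. -/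
def OrdTendsto (α : Ordinal.{0}) (f : Ordinal.{0} → CTG S.bot) (g : CTG S.bot) : Prop :=
  ∀ ε : ℝ, 0 < ε → ∃ β < α, ∀ ι : Ordinal.{0}, β < ι → ι < α → rdist (f ι) g < ε

/-- `u` is the unravelling of `g`: the term tree with the same positions and
labels as `g` and trivial aliasing. -/
def IsUnravelling (g u : CTG S) : Prop :=
  u.pos = g.pos ∧ (∀ π ∈ g.pos, u.labAt π = g.labAt π) ∧
  (∀ π π' : List ℕ, u.Aliases π π' ↔ (π ∈ g.pos ∧ π = π'))

end CTG

/-- A labelled quotient tree over a signature `S`. -/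
structure LQT (S : Signature) where
  P : Set (List ℕ)
  nonempty : P.Nonempty
  l : List ℕ → S.Sym
  rel : List ℕ → List ℕ → Prop
  rel_refl : ∀ π ∈ P, rel π π
  rel_symm : ∀ π π' : List ℕ, rel π π' → rel π' π
  rel_trans : ∀ π π' π'' : List ℕ, rel π π' → rel π' π'' → rel π π''
  rel_mem : ∀ π π' : List ℕ, rel π π' → π ∈ P ∧ π' ∈ P
  reach_mem : ∀ (π : List ℕ) (i : ℕ), π ++ [i] ∈ P → π ∈ P
  reach_ar : ∀ (π : List ℕ) (i : ℕ), π ++ [i] ∈ P → i < S.ar (l π)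
  congr_lab : ∀ π π' : List ℕ, rel π π' → l π = l π'
  congr_suc : ∀ (π π' : List ℕ) (i : ℕ), rel π π' → i < S.ar (l π) →
    rel (π ++ [i]) (π' ++ [i])

end TGR

/-!
A rigid `⊥`-homomorphism `φ : g → h` preserves the acyclic positions of every node not labelled
`⊥`, so on such nodes it is injective and preserves depth and acyclic predecessors. As `g` has no
`⊥`-node of depth `< d`, every node retained in `g†d` is such a node, and `φ` maps the retained
nodes of `g` bijectively onto those of `h` (surjectivity because positions of length `≤ d` in `h`
lift to `g`). An edge out of a retained node `n` is redirected to the fringe in `g†d` iff the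
same edge out of `φ n` is in `h†d`; the only delicate case is an edge into a `⊥`-node `s` of `g`,
where rigidity prevents `φ n` from being an acyclic predecessor of a retained `φ s`. Hence `φ`
induces a bijective homomorphism `g†d → h†d`.
-/

namespace TGR

namespace TermGraph

section Positions

variable {S : Signature} {N : Type} {g : TermGraph S N}

theorem IsPos.eq_root_of_nil {n : N} (hp : g.IsPos [] n) : n = g.root := by
  generalize hρ : ([] : List ℕ) = ρ at hp
  cases hp with
  | root => rfl
  | step _ _ => simp at hρ

theorem IsPos.of_append_singleton {π : List ℕ} {i : ℕ} {n : N} (hp : g.IsPos (π ++ [i]) n) :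
    ∃ (m : N) (hi : i < S.ar (g.lab m)), g.IsPos π m ∧ n = g.suc m ⟨i, hi⟩ := by
  generalize hρ : π ++ [i] = ρ at hp
  cases hp with
  | root => simp at hρ
  | @step π' m hm j =>
    obtain ⟨rfl, hj⟩ := List.append_inj' hρ rfl
    obtain rfl : i = j := by simpa using hj
    exact ⟨m, j.isLt, hm, rfl⟩

theorem IsPos.unique {π : List ℕ} {n n' : N} (h₁ : g.IsPos π n) (h₂ : g.IsPos π n') :
    n = n' := by
  induction π using List.reverseRecOn generalizing n n' with
  | nil => rw [h₁.eq_root_of_nil, h₂.eq_root_of_nil]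
  | append_singleton π i ih =>
    obtain ⟨m, hi, hm, rfl⟩ := h₁.of_append_singleton
    obtain ⟨m', hi', hm', rfl⟩ := h₂.of_append_singleton
    cases ih hm hm'
    rfl

theorem IsPos.replace_prefix {α α' β : List ℕ} {m n : N} (hm : g.IsPos α m)
    (hm' : g.IsPos α' m) (hn : g.IsPos (α ++ β) n) : g.IsPos (α' ++ β) n := by
  induction β using List.reverseRecOn generalizing n with
  | nil =>
    rw [List.append_nil] at hn ⊢
    rwa [← hm.unique hn]
  | append_singleton β j ih =>
    rw [← List.append_assoc] at hn ⊢
    obtain ⟨k, hj, hk, rfl⟩ := hn.of_append_singleton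
    exact (ih hk).step ⟨j, hj⟩

theorem IsAcyclicPos.of_prefix {σ π : List ℕ} (hπ : g.IsAcyclicPos π) (hσ : σ <+: π) :
    g.IsAcyclicPos σ :=
  fun π₁ π₂ n h₁₂ h₂ => hπ π₁ π₂ n h₁₂ (h₂.trans hσ)

/-- A repeated node would have to be `v`, which the acyclic `π ++ [j]` reaches only at its end. -/
theorem IsAcyclicPos.append_singleton {π : List ℕ} {i j : ℕ} {v : N}
    (hacy : g.IsAcyclicPos (π ++ [j])) (hj : g.IsPos (π ++ [j]) v) (hi : g.IsPos (π ++ [i]) v) :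
    g.IsAcyclicPos (π ++ [i]) := by
  intro σ₁ σ₂ w h₁₂ h₂ hw₁ hw₂
  rcases List.prefix_concat_iff.mp h₂ with rfl | h₂π
  · obtain rfl : w = v := hw₂.unique hi
    rcases List.prefix_concat_iff.mp h₁₂ with rfl | h₁π
    · rfl
    · have hσ₁ := hacy σ₁ (π ++ [j]) w (h₁π.trans (List.prefix_append _ _)) List.prefix_rfl hw₁ hj
      have hlen := h₁π.length_le
      simp [hσ₁] at hlen
  · exact hacy σ₁ σ₂ w h₁₂ (h₂π.trans (List.prefix_append _ _)) hw₁ hw₂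

theorem IsPos.depth_le {π : List ℕ} {n : N} (hp : g.IsPos π n) : g.depth n ≤ π.length :=
  Nat.sInf_le ⟨π, hp, rfl⟩

theorem IsPos.isAcyclicPos_of_length_eq_depth {π : List ℕ} {n : N} (hp : g.IsPos π n)
    (hlen : π.length = g.depth n) : g.IsAcyclicPos π := by
  intro π₁ π₂ m h₁₂ h₂ hm₁ hm₂
  by_contra hne
  obtain ⟨β, rfl⟩ := h₂
  -- skipping the cycle between `π₁` and `π₂` gives a shorter position
  have hshort := (hm₂.replace_prefix hm₁ hp).depth_le
  have hlt : π₁.length < π₂.length :=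
    lt_of_le_of_ne h₁₂.length_le fun he => hne (h₁₂.eq_of_length he)
  simp only [List.length_append] at hlen hshort
  omega

theorem exists_isPos_depth {n : N} (hn : ∃ π, g.IsPos π n) :
    ∃ π, g.IsPos π n ∧ g.IsAcyclicPos π ∧ π.length = g.depth n := by
  obtain ⟨π₀, hπ₀⟩ := hn
  obtain ⟨π, hπ, hlen⟩ := Nat.sInf_mem (s := {k | ∃ π, g.IsPos π n ∧ π.length = k})
    ⟨_, π₀, hπ₀, rfl⟩
  exact ⟨π, hπ, hπ.isAcyclicPos_of_length_eq_depth hlen, hlen⟩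

theorem depth_suc_le {n : N} (hn : ∃ π, g.IsPos π n) (i : Fin (S.ar (g.lab n))) :
    g.depth (g.suc n i) ≤ g.depth n + 1 := by
  obtain ⟨π, hπ, -, hlen⟩ := exists_isPos_depth hn
  simpa [hlen] using (hπ.step i).depth_le

end Positions

theorem iso_of_bijective {S : Signature} {N M : Type} {g : TermGraph S N}
    {h : TermGraph S M} {φ : N → M} (hom : IsDHom ∅ g h φ) (hbij : Function.Bijective φ) :
    Iso g h := by
  set e := Equiv.ofBijective φ hbij
  refine ⟨φ, e.symm, hom, ⟨?_, fun m => ?_, fun m => ?_⟩, e.symm_apply_apply, e.apply_symm_apply⟩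
  · rw [← hom.root_eq]
    exact e.symm_apply_apply _
  · obtain ⟨n, rfl⟩ := hbij.2 m
    rw [Equiv.ofBijective_symm_apply_apply]
    exact fun _ => (hom.lab_eq n (Set.notMem_empty _)).symm
  · obtain ⟨n, rfl⟩ := hbij.2 m
    rw [Equiv.ofBijective_symm_apply_apply]
    intro _ i hi hi'
    apply hbij.1
    rw [Equiv.ofBijective_apply_symm_apply φ hbij, hom.suc_eq n (Set.notMem_empty _) i hi' hi]

section Rigid

variable {S : Signature} {N M : Type} {Δ : Set S.Sym} {g : TermGraph S N} {h : TermGraph S M}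
  {φ : N → M}

theorem IsRigid.mem_nodePosAcy_iff (hrig : IsRigid Δ g h φ) {n : N} (hn : g.lab n ∉ Δ)
    {π : List ℕ} : π ∈ h.nodePosAcy (φ n) ↔ π ∈ g.nodePosAcy n := by
  rw [hrig n hn]

theorem IsRigid.injOn (hrig : IsRigid Δ g h φ) (hg : g.Reachable) :
    Set.InjOn φ {n | g.lab n ∉ Δ} := by
  intro n hn n' hn' he
  obtain ⟨π, hπ, hacy, -⟩ := exists_isPos_depth (hg n)
  have hπ' := (hrig.mem_nodePosAcy_iff hn').1 (he ▸ (hrig.mem_nodePosAcy_iff hn).2 ⟨hπ, hacy⟩)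
  exact hπ.unique hπ'.1

theorem IsRigid.depth_eq (hrig : IsRigid Δ g h φ) (hg : g.Reachable) (hh : h.Reachable)
    {n : N} (hn : g.lab n ∉ Δ) : h.depth (φ n) = g.depth n := by
  apply le_antisymm
  · obtain ⟨π, hπ, hacy, hlen⟩ := exists_isPos_depth (hg n)
    exact hlen ▸ ((hrig.mem_nodePosAcy_iff hn).2 ⟨hπ, hacy⟩).1.depth_le
  · obtain ⟨π, hπ, hacy, hlen⟩ := exists_isPos_depth (hh (φ n))
    exact hlen ▸ ((hrig.mem_nodePosAcy_iff hn).1 ⟨hπ, hacy⟩).1.depth_le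

theorem IsRigid.map_mem_acyPred_iff (hrig : IsRigid Δ g h φ) {m n : N} (hm : g.lab m ∉ Δ)
    (hn : g.lab n ∉ Δ) : φ m ∈ h.acyPred (φ n) ↔ m ∈ g.acyPred n := by
  constructor
  · rintro ⟨π, i, hπi, hπ⟩
    have hπi' := (hrig.mem_nodePosAcy_iff hn).1 hπi
    refine ⟨π, i, hπi', ((hrig.mem_nodePosAcy_iff hm).1 ⟨hπ, ?_⟩).1⟩
    exact hπi.2.of_prefix (List.prefix_append _ _)
  · rintro ⟨π, i, hπi, hπ⟩
    refine ⟨π, i, (hrig.mem_nodePosAcy_iff hn).2 hπi, ((hrig.mem_nodePosAcy_iff hm).2 ⟨hπ, ?_⟩).1⟩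
    exact hπi.2.of_prefix (List.prefix_append _ _)

/-- Appending the edge `i` to the position of `φ n` witnessing the predecessor gives an acyclic
position of `φ k`, which rigidity pulls back to `k`. -/
theorem IsRigid.eq_suc_of_mem_acyPred (hrig : IsRigid Δ g h φ) {n k : N} (hn : g.lab n ∉ Δ)
    (hk : g.lab k ∉ Δ) {i : ℕ} (hi : i < S.ar (g.lab n)) (hi' : i < S.ar (h.lab (φ n)))
    (hφk : φ k = h.suc (φ n) ⟨i, hi'⟩) (hpred : φ n ∈ h.acyPred (φ k)) :
    k = g.suc n ⟨i, hi⟩ := by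
  obtain ⟨π, j, ⟨hπj, hacy⟩, hπ⟩ := hpred
  have hπg := ((hrig.mem_nodePosAcy_iff hn).1 ⟨hπ, hacy.of_prefix (List.prefix_append _ _)⟩).1
  have hπi : h.IsPos (π ++ [i]) (φ k) := hφk ▸ hπ.step ⟨i, hi'⟩
  have hπi' := (hrig.mem_nodePosAcy_iff hk).1 ⟨hπi, hacy.append_singleton hπj hπi⟩
  exact hπi'.1.unique (hπg.step ⟨i, hi⟩)

end Rigid

section Bot

variable {S : Signature} {N M : Type} {g : TermGraph S.bot N} {h : TermGraph S.bot M}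
  {φ : N → M} {d : ℕ}

theorem lab_ne_none_of_lt_ar {n : N} {i : ℕ} (hi : i < S.bot.ar (g.lab n)) : g.lab n ≠ none :=
  fun he => by rw [he] at hi; exact Nat.not_lt_zero _ hi

theorem lab_ne_none_of_mem_acyPred {m n : N} (hm : m ∈ g.acyPred n) : g.lab m ≠ none := by
  obtain ⟨π, i, ⟨hπi, -⟩, hπ⟩ := hm
  obtain ⟨m', hi, hπ', -⟩ := hπi.of_append_singleton
  rw [hπ.unique hπ']
  exact lab_ne_none_of_lt_ar hi

theorem IsRigid.exists_mem_acyPred_map_eq (hrig : IsRigid ({none} : Set (Option S.Sym)) g h φ)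
    {n : N} (hn : g.lab n ≠ none) {m' : M} (hm' : m' ∈ h.acyPred (φ n)) :
    ∃ m ∈ g.acyPred n, φ m = m' := by
  obtain ⟨π, i, hπi, hπ'⟩ := hm'
  have hπi := (hrig.mem_nodePosAcy_iff (Set.notMem_singleton_iff.2 hn)).1 hπi
  obtain ⟨m, hi, hπ, -⟩ := hπi.1.of_append_singleton
  have hπm := (hrig.mem_nodePosAcy_iff (Set.notMem_singleton_iff.2 (lab_ne_none_of_lt_ar hi))).2
    ⟨hπ, hπi.2.of_prefix (List.prefix_append _ _)⟩
  exact ⟨m, ⟨π, i, hπi, hπ⟩, hπm.1.unique hπ'⟩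

theorem le_depth_of_lab_eq_none (hd : (d : ℕ∞) ≤ g.botDepth) {n : N} (hn : g.lab n = none) :
    d ≤ g.depth n := by
  exact_mod_cast hd.trans (sInf_le ⟨n, hn, rfl⟩)

theorem Retained.lab_ne_none (hd : (d : ℕ∞) ≤ g.botDepth) {n : N} (hr : g.Retained d n) :
    g.lab n ≠ none := by
  induction hr with
  | shallow hdep => exact fun hn => (le_depth_of_lab_eq_none hd hn).not_gt hdep
  | pred _ hm _ => exact lab_ne_none_of_mem_acyPred hm

theorem Retained.map (hrig : IsRigid ({none} : Set (Option S.Sym)) g h φ) (hg : g.Reachable)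
    (hh : h.Reachable) (hd : (d : ℕ∞) ≤ g.botDepth) {n : N} (hr : g.Retained d n) :
    h.Retained d (φ n) := by
  induction hr with
  | shallow hdep =>
    refine .shallow ?_
    rwa [hrig.depth_eq hg hh (Set.notMem_singleton_iff.2 (Retained.shallow hdep |>.lab_ne_none hd))]
  | @pred n m hn hm ih =>
    refine .pred ih ((hrig.map_mem_acyPred_iff ?_ ?_).2 hm) <;>
      apply Set.notMem_singleton_iff.2
    exacts [lab_ne_none_of_mem_acyPred hm, hn.lab_ne_none hd]

/-- The nodes passed in `g` have depth `< d`, so they are not `⊥`-labelled and `φ` preserves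
their edges. -/
theorem IsPos.exists_preimage (hom : IsDHom ({none} : Set (Option S.Sym)) g h φ)
    (hd : (d : ℕ∞) ≤ g.botDepth) {π : List ℕ} {m : M} (hp : h.IsPos π m) (hlen : π.length ≤ d) :
    ∃ n, g.IsPos π n ∧ φ n = m := by
  induction hp with
  | root => exact ⟨g.root, .root, hom.root_eq⟩
  | @step π m hp i ih =>
    rw [List.length_append, List.length_singleton] at hlen
    obtain ⟨n, hn, rfl⟩ := ih (by omega)
    have hne : g.lab n ∉ ({none} : Set _) := Set.notMem_singleton_iff.2 fun he =>
      (le_depth_of_lab_eq_none hd he).not_gt (hn.depth_le.trans_lt (by omega))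
    have hi : (i : ℕ) < S.bot.ar (g.lab n) := hom.lab_eq n hne ▸ i.isLt
    exact ⟨_, hn.step ⟨i, hi⟩, hom.suc_eq n hne i hi i.isLt⟩

theorem Retained.exists_preimage (hφ : IsRigidBotHom g h φ) (hh : h.Reachable)
    (hd : (d : ℕ∞) ≤ g.botDepth) {m : M} (hr : h.Retained d m) :
    ∃ n, g.Retained d n ∧ φ n = m := by
  induction hr with
  | @shallow m hdep =>
    obtain ⟨π, hπ, -, hlen⟩ := exists_isPos_depth (hh m)
    obtain ⟨n, hn, hφn⟩ := hπ.exists_preimage hφ.1 hd (by omega)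
    exact ⟨n, .shallow (hn.depth_le.trans_lt (by omega)), hφn⟩
  | pred _ hk ih =>
    obtain ⟨n, hn, rfl⟩ := ih
    obtain ⟨m, hm, hφm⟩ := hφ.2.exists_mem_acyPred_map_eq (hn.lab_ne_none hd) hk
    exact ⟨m, .pred hn hm, hφm⟩

theorem injOn_retained (hrig : IsRigid ({none} : Set (Option S.Sym)) g h φ) (hg : g.Reachable)
    (hd : (d : ℕ∞) ≤ g.botDepth) : Set.InjOn φ {n | g.Retained d n} :=
  (hrig.injOn hg).mono fun _ hn => Set.notMem_singleton_iff.2 (Retained.lab_ne_none hd hn)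

theorem map_retained_iff (hφ : IsRigidBotHom g h φ) (hg : g.Reachable) (hh : h.Reachable)
    (hd : (d : ℕ∞) ≤ g.botDepth) {n : N} (hn : g.lab n ≠ none) :
    h.Retained d (φ n) ↔ g.Retained d n := by
  refine ⟨fun hr => ?_, Retained.map hφ.2 hg hh hd⟩
  obtain ⟨n', hn', he⟩ := hr.exists_preimage hφ hh hd
  rwa [← hφ.2.injOn hg (Set.notMem_singleton_iff.2 (hn'.lab_ne_none hd))
    (Set.notMem_singleton_iff.2 hn) he]

end Bot

section Truncation

variable {S : Signature} {N M : Type} {g : TermGraph S.bot N} {h : TermGraph S.bot M}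
  {φ : N → M} {d : ℕ}

theorem Retained.of_isFringe (hd0 : d ≠ 0) {p : N × ℕ} (hf : g.IsFringe d p) :
    g.Retained d p.1 := by
  rw [IsFringe, if_neg hd0] at hf
  exact hf.1

theorem isFringe_zero_iff {p : N × ℕ} : g.IsFringe 0 p ↔ p = (g.root, 0) := by
  rw [IsFringe, if_pos rfl]

instance (g : TermGraph S.bot N) : Subsingleton (TNode g 0) := by
  refine ⟨fun ⟨x, hx⟩ ⟨y, hy⟩ => Subtype.ext ?_⟩
  rcases x with n | p <;> rcases y with n' | p'
  · exact (not_retained_zero n hx).elim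
  · exact (not_retained_zero n hx).elim
  · exact (not_retained_zero n' hy).elim
  · exact congrArg Sum.inr ((isFringe_zero_iff.1 hx).trans (isFringe_zero_iff.1 hy).symm)

theorem trunc_root_val (g : TermGraph S.bot N) (d : ℕ) :
    (g.trunc d).root.1 = if d = 0 then Sum.inr (g.root, 0) else Sum.inl g.root := by
  by_cases hd0 : d = 0 <;> simp [trunc, truncRoot, hd0]

open Classical in
theorem trunc_suc_val_of_val_eq_inl {x : TNode g d} {n : N} (hx : x.1 = Sum.inl n) {i : ℕ}
    (hi : i < S.bot.ar ((g.trunc d).lab x)) (hi' : i < S.bot.ar (g.lab n)) :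
    ((g.trunc d).suc x ⟨i, hi⟩).1 =
      if g.IsFringe d (n, i) then Sum.inr (n, i) else Sum.inl (g.suc n ⟨i, hi'⟩) := by
  obtain ⟨_, _⟩ := x
  subst hx
  by_cases hf : g.IsFringe d (n, i) <;> simp [trunc, truncSuc, hf]

/-- The disjunctions say that the edge `i` is redirected to the fringe. If `suc_i n` is
`⊥`-labelled, this holds in `g†d`; in `h†d` a retained target of the edge is `φ k` for a
non-`⊥` node `k`, and `φ n` cannot be an acyclic predecessor of it, as then `k = suc_i n`. -/
theorem fringe_condition_map_iff (hφ : IsRigidBotHom g h φ) (hg : g.Reachable)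
    (hh : h.Reachable) (hd : (d : ℕ∞) ≤ g.botDepth) {n : N} (hr : g.Retained d n) {i : ℕ}
    (hi : i < S.bot.ar (g.lab n)) (hi' : i < S.bot.ar (h.lab (φ n))) :
    (¬ h.Retained d (h.suc (φ n) ⟨i, hi'⟩) ∨
        (d - 1 ≤ h.depth (φ n) ∧ φ n ∉ h.acyPred (h.suc (φ n) ⟨i, hi'⟩))) ↔
      (¬ g.Retained d (g.suc n ⟨i, hi⟩) ∨
        (d - 1 ≤ g.depth n ∧ n ∉ g.acyPred (g.suc n ⟨i, hi⟩))) := by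
  have hn := hr.lab_ne_none hd
  have hsuc := hφ.1.suc_eq n (Set.notMem_singleton_iff.2 hn) i hi hi'
  rw [← hsuc, hφ.2.depth_eq hg hh (Set.notMem_singleton_iff.2 hn)]
  by_cases hs : g.lab (g.suc n ⟨i, hi⟩) = none
  · have hcut : ¬ g.Retained d (g.suc n ⟨i, hi⟩) := fun hc => hc.lab_ne_none hd hs
    simp only [hcut, not_false_eq_true, true_or, iff_true]
    refine or_iff_not_imp_left.2 fun hRs => ⟨?_, fun hpred => ?_⟩
    · have := le_depth_of_lab_eq_none hd hs
      have := depth_suc_le (hg n) ⟨i, hi⟩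
      omega
    · obtain ⟨k, hk, hφk⟩ := (not_not.1 hRs).exists_preimage hφ hh hd
      rw [← hφk] at hpred
      have hks := hφ.2.eq_suc_of_mem_acyPred (Set.notMem_singleton_iff.2 hn)
        (Set.notMem_singleton_iff.2 (hk.lab_ne_none hd)) hi hi' (hφk.trans hsuc) hpred
      exact hk.lab_ne_none hd (hks ▸ hs)
  · rw [map_retained_iff hφ hg hh hd hs, hφ.2.map_mem_acyPred_iff
      (Set.notMem_singleton_iff.2 hn) (Set.notMem_singleton_iff.2 hs)]

theorem map_isFringe_iff (hφ : IsRigidBotHom g h φ) (hg : g.Reachable) (hh : h.Reachable)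
    (hd : (d : ℕ∞) ≤ g.botDepth) {n : N} (hr : g.Retained d n) (i : ℕ) :
    h.IsFringe d (φ n, i) ↔ g.IsFringe d (n, i) := by
  have hd0 : d ≠ 0 := by rintro rfl; exact not_retained_zero n hr
  have hlab := hφ.1.lab_eq n (Set.notMem_singleton_iff.2 (hr.lab_ne_none hd))
  simp only [IsFringe, if_neg hd0]
  constructor
  · rintro ⟨-, hi', hcut⟩
    have hi : i < S.bot.ar (g.lab n) := by rwa [← hlab]
    exact ⟨hr, hi, (fringe_condition_map_iff hφ hg hh hd hr hi hi').1 hcut⟩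
  · rintro ⟨-, hi, hcut⟩
    have hi' : i < S.bot.ar (h.lab (φ n)) := by rwa [hlab]
    exact ⟨hr.map hφ.2 hg hh hd, hi', (fringe_condition_map_iff hφ hg hh hd hr hi hi').2 hcut⟩

theorem mapsTo_tNode (hφ : IsRigidBotHom g h φ) (hg : g.Reachable) (hh : h.Reachable)
    (hd : (d : ℕ∞) ≤ g.botDepth) :
    ∀ x, Sum.elim (g.Retained d) (g.IsFringe d) x →
      Sum.elim (h.Retained d) (h.IsFringe d) (Sum.map φ (Prod.map φ id) x)
  | Sum.inl _, hr => Retained.map hφ.2 hg hh hd hr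
  | Sum.inr (n, i), hf => by
    rcases eq_or_ne d 0 with rfl | hd0
    · obtain ⟨rfl, rfl⟩ := Prod.ext_iff.1 (isFringe_zero_iff.1 hf)
      exact isFringe_zero_iff.2 (by simp [hφ.1.root_eq])
    · exact (map_isFringe_iff hφ hg hh hd (Retained.of_isFringe hd0 hf) i).2 hf

def truncMap (hφ : IsRigidBotHom g h φ) (hg : g.Reachable) (hh : h.Reachable)
    (hd : (d : ℕ∞) ≤ g.botDepth) : TNode g d → TNode h d :=
  Subtype.map (Sum.map φ (Prod.map φ id)) (mapsTo_tNode hφ hg hh hd)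

theorem truncMap_val (hφ : IsRigidBotHom g h φ) (hg : g.Reachable) (hh : h.Reachable)
    (hd : (d : ℕ∞) ≤ g.botDepth) (x : TNode g d) :
    (truncMap hφ hg hh hd x).1 = Sum.map φ (Prod.map φ id) x.1 :=
  rfl

theorem truncMap_injective (hφ : IsRigidBotHom g h φ) (hg : g.Reachable) (hh : h.Reachable)
    (hd : (d : ℕ∞) ≤ g.botDepth) : Function.Injective (truncMap hφ hg hh hd) := by
  rcases eq_or_ne d 0 with rfl | hd0
  · exact fun _ _ _ => Subsingleton.elim _ _
  have hinj := injOn_retained hφ.2 hg hd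
  rintro ⟨x, hx⟩ ⟨y, hy⟩ hxy
  replace hxy : Sum.map φ (Prod.map φ id) x = Sum.map φ (Prod.map φ id) y :=
    congrArg Subtype.val hxy
  apply Subtype.ext
  rcases x with n | ⟨n, i⟩ <;> rcases y with n' | ⟨n', i'⟩ <;>
    simp only [Sum.map_inl, Sum.map_inr, Prod.map, id, Sum.inl.injEq,
      Sum.inr.injEq, reduceCtorEq, Prod.mk.injEq] at hxy ⊢
  · exact hinj hx hy hxy
  · exact ⟨hinj (Retained.of_isFringe hd0 hx) (Retained.of_isFringe hd0 hy) hxy.1, hxy.2⟩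

theorem truncMap_surjective (hφ : IsRigidBotHom g h φ) (hg : g.Reachable) (hh : h.Reachable)
    (hd : (d : ℕ∞) ≤ g.botDepth) : Function.Surjective (truncMap hφ hg hh hd) := by
  rcases eq_or_ne d 0 with rfl | hd0
  · exact fun _ => ⟨truncRoot g 0, Subsingleton.elim _ _⟩
  rintro ⟨m | ⟨m, i⟩, hy⟩
  · obtain ⟨n, hn, rfl⟩ := Retained.exists_preimage hφ hh hd hy
    exact ⟨⟨Sum.inl n, hn⟩, rfl⟩
  · obtain ⟨n, hn, rfl⟩ := (Retained.of_isFringe hd0 hy).exists_preimage hφ hh hd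
    exact ⟨⟨Sum.inr (n, i), (map_isFringe_iff hφ hg hh hd hn i).1 hy⟩, rfl⟩

theorem isDHom_truncMap (hφ : IsRigidBotHom g h φ) (hg : g.Reachable) (hh : h.Reachable)
    (hd : (d : ℕ∞) ≤ g.botDepth) : IsDHom ∅ (g.trunc d) (h.trunc d) (truncMap hφ hg hh hd) where
  root_eq := by
    apply Subtype.ext
    rw [truncMap_val, trunc_root_val, trunc_root_val]
    split_ifs <;> simp [hφ.1.root_eq]
  lab_eq := by
    rintro ⟨n | p, hx⟩ -
    · exact hφ.1.lab_eq n (Set.notMem_singleton_iff.2 (Retained.lab_ne_none hd hx))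
    · rfl
  suc_eq := by
    rintro ⟨n | p, hx⟩ - i hi hi'
    · have hn := Set.notMem_singleton_iff.2 (Retained.lab_ne_none hd hx)
      apply Subtype.ext
      rw [truncMap_val, trunc_suc_val_of_val_eq_inl rfl hi hi,
        trunc_suc_val_of_val_eq_inl rfl hi' hi', map_isFringe_iff hφ hg hh hd hx i]
      split_ifs
      · rfl
      · simp [hφ.1.suc_eq n hn i hi hi']
    · exact absurd hi (Nat.not_lt_zero i)

end Truncation

end TermGraph

/-- If `g ≤⊥r h` and the `⊥`-depth of `g` is at least `d`,
then the rigid truncations of `g` and `h` at depth `d` are isomorphic. -/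
theorem leR_trunc_iso (S : Signature) (N M : Type)
    (g : TermGraph S.bot N) (h : TermGraph S.bot M)
    (hg : g.Reachable) (hh : h.Reachable) (d : ℕ)
    (hle : ∃ φ, TermGraph.IsRigidBotHom g h φ)
    (hd : (d : ℕ∞) ≤ g.botDepth) :
    TermGraph.Iso (g.trunc d) (h.trunc d) := by
  obtain ⟨φ, hφ⟩ := hle
  exact TermGraph.iso_of_bijective (TermGraph.isDHom_truncMap hφ hg hh hd)
    ⟨TermGraph.truncMap_injective hφ hg hh hd, TermGraph.truncMap_surjective hφ hg hh hd⟩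

end TGR
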